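/- arXiv:2405.19551 — 8 statements merged into one kernel-verified Lean document; each statement's English description precedes it below -/
import Mathlib

section
/- Let N ≥ 2 and let g ∈ ℝ^N satisfy g ≠ 0 and Σ_{i≤N} g_i = 0. Then (i) for every v ∈ ℝ^N with ‖v‖_tr = 1 one has Σ_{i≤N} g_i·v_i ≥ Σ_{i : g_i < 0} g_i; and (ii) for any v with ‖v‖_tr = 1, equality Σ_{i≤N} g_i·v_i = Σ_{i : g_i < 0} g_i holds if and only if v_i = max_{j≤N} v_j whenever g_i < 0 and v_i = min_{j≤N} v_j whenever g_i > 0. (That is, the tropical steepest descent directions at a point with gradient g are exactly, up to adding a multiple of the all-ones vector, the 0/1 vectors with v_i = 1 where g_i < 0 and v_i = 0 where g_i > 0.) -/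
/-- The tropical norm on ℝ^N : `‖x‖_tr = max_i x_i − min_i x_i`. -/
noncomputable def trNorm {N : ℕ} [NeZero N] (x : Fin N → ℝ) : ℝ :=
  Finset.univ.sup' Finset.univ_nonempty x - Finset.univ.inf' Finset.univ_nonempty x

/-- Characterization of tropical steepest descent directions: for `g ≠ 0` with
`∑ g i = 0`, the minimum of `∑ g i * v i` over `‖v‖_tr = 1` equals the sum of the
negative coordinates of `g`, and equality holds exactly when `v` is maximal on the
coordinates where `g < 0` and minimal on the coordinates where `g > 0`. -/
theorem stmt0 {N : ℕ} [NeZero N] (hN : 2 ≤ N) (g : Fin N → ℝ) (hg : g ≠ 0)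
    (hsum : ∑ i, g i = 0) :
    (∀ v : Fin N → ℝ, trNorm v = 1 →
      ∑ i ∈ Finset.univ.filter (fun i => g i < 0), g i ≤ ∑ i, g i * v i) ∧
    (∀ v : Fin N → ℝ, trNorm v = 1 →
      ((∑ i, g i * v i = ∑ i ∈ Finset.univ.filter (fun i => g i < 0), g i) ↔
        ((∀ i, g i < 0 → v i = Finset.univ.sup' Finset.univ_nonempty v) ∧
         (∀ i, 0 < g i → v i = Finset.univ.inf' Finset.univ_nonempty v)))) := by
  have key : ∀ v : Fin N → ℝ, trNorm v = 1 →
      ∑ i, g i * v i - ∑ i ∈ Finset.univ.filter (fun i => g i < 0), g i =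
      ∑ i, (if g i < 0 then g i * (v i - Finset.univ.sup' Finset.univ_nonempty v)
            else g i * (v i - Finset.univ.inf' Finset.univ_nonempty v)) := by
    intro v hv
    set M := Finset.univ.sup' Finset.univ_nonempty v with hM
    set m := Finset.univ.inf' Finset.univ_nonempty v with hm
    have hMm : M - m = 1 := hv
    have h1 : ∑ i ∈ Finset.univ.filter (fun i => g i < 0), g i
        = ∑ i, (if g i < 0 then g i else 0) := by
      rw [Finset.sum_filter]
    have h2 : ∑ i, (if g i < 0 then g i * M else g i * m)
        = (M - m) * ∑ i, (if g i < 0 then g i else 0) + m * ∑ i, g i := by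
      rw [Finset.mul_sum, Finset.mul_sum, ← Finset.sum_add_distrib]
      apply Finset.sum_congr rfl
      intro i _
      by_cases h : g i < 0 <;> simp [h] <;> ring
    have h3 : ∑ i, (if g i < 0 then g i * M else g i * m)
        = ∑ i ∈ Finset.univ.filter (fun i => g i < 0), g i := by
      rw [h2, hsum, hMm, h1]; ring
    calc ∑ i, g i * v i - ∑ i ∈ Finset.univ.filter (fun i => g i < 0), g i
        = ∑ i, (g i * v i - (if g i < 0 then g i * M else g i * m)) := by
          rw [Finset.sum_sub_distrib, h3]
      _ = ∑ i, (if g i < 0 then g i * (v i - M) else g i * (v i - m)) := by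
          apply Finset.sum_congr rfl
          intro i _
          by_cases h : g i < 0 <;> simp [h] <;> ring
  have hnn : ∀ v : Fin N → ℝ, ∀ i : Fin N,
      0 ≤ (if g i < 0 then g i * (v i - Finset.univ.sup' Finset.univ_nonempty v)
            else g i * (v i - Finset.univ.inf' Finset.univ_nonempty v)) := by
    intro v i
    by_cases h : g i < 0
    · simp only [h, if_true]
      have hvM : v i ≤ Finset.univ.sup' Finset.univ_nonempty v :=
        Finset.le_sup' v (Finset.mem_univ i)
      nlinarith [h.le, hvM]
    · simp only [h, if_false]
      have hvm : Finset.univ.inf' Finset.univ_nonempty v ≤ v i :=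
        Finset.inf'_le v (Finset.mem_univ i)
      exact mul_nonneg (not_lt.mp h) (by linarith)
  constructor
  · intro v hv
    have := key v hv
    have h0 : 0 ≤ ∑ i, (if g i < 0 then g i * (v i - Finset.univ.sup' Finset.univ_nonempty v)
            else g i * (v i - Finset.univ.inf' Finset.univ_nonempty v)) :=
      Finset.sum_nonneg (fun i _ => hnn v i)
    linarith
  · intro v hv
    have hk := key v hv
    set M := Finset.univ.sup' Finset.univ_nonempty v with hM
    set m := Finset.univ.inf' Finset.univ_nonempty v with hm
    constructor
    · intro heq
      have hz : ∑ i, (if g i < 0 then g i * (v i - M) else g i * (v i - m)) = 0 := by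
        rw [← hk, heq]; ring
      have hall := (Finset.sum_eq_zero_iff_of_nonneg (fun i _ => hnn v i)).mp hz
      constructor
      · intro i hi
        have := hall i (Finset.mem_univ i)
        simp only [hi, if_true] at this
        have : v i - M = 0 := by
          rcases mul_eq_zero.mp this with h | h
          · exact absurd h hi.ne
          · exact h
        linarith
      · intro i hi
        have := hall i (Finset.mem_univ i)
        simp only [not_lt.mpr hi.le, if_false] at this
        have : v i - m = 0 := by
          rcases mul_eq_zero.mp this with h | h
          · exact absurd h hi.ne'
          · exact h
        linarith
    · rintro ⟨hmax, hmin⟩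
      have hz : ∑ i, (if g i < 0 then g i * (v i - M) else g i * (v i - m)) = 0 := by
        apply Finset.sum_eq_zero
        intro i _
        rcases lt_trichotomy (g i) 0 with h | h | h
        · simp [h, hmax i h]
        · simp [h]
        · simp [not_lt.mpr h.le, hmin i h]
      linarith
end

section
/- Let f : ℝ^N → ℝ be a min-tropical location problem with data x_1,…,x_K ∈ ℝ^N. For t ∈ ℝ^N let M_f(t) be the set of all z ∈ ℝ^N for which there exists a sequence (y_l) in ℝ^N converging to t such that f is Fréchet differentiable at every y_l and the gradients ∇f(y_l) converge to z, and let ∂f(t) be the convex hull of M_f(t) (the generalized Clarke derivative of f at t). Then every z ∈ ∂f(t) satisfies: if z_j < 0 for some coordinate j, then there exists k ≤ K with t_j − x_{kj} = min_{i≤N}(t_i − x_{ki}). -/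
/-- Generalized Clarke derivative of a min-tropical location problem: any element of the
convex hull of limits of gradients has a negative `j`-th coordinate only if `j` attains
`min_i (t_i − x_{k i})` for some data point `x_k`. Here `f t = g (h₁ t, …, h_K t)` with
`g` monotone and `h_k t = γ_k ((t − x_k) − min_i (t_i − x_{k i}) · 𝟏)` with `γ_k` monotone,
and the gradient of `f` at a point of differentiability is the vector of partial
derivatives `j ↦ (fderiv ℝ f y) (Pi.single j 1)`. -/
theorem stmt1 {N K : ℕ} [NeZero N] (f : (Fin N → ℝ) → ℝ) (x : Fin K → Fin N → ℝ)
    (g : (Fin K → ℝ) → ℝ) (γ : Fin K → (Fin N → ℝ) → ℝ)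
    (hg : Monotone g) (hγ : ∀ k, Monotone (γ k))
    (hf : ∀ t, f t = g (fun k => γ k (fun i =>
      (t i - x k i) - Finset.univ.inf' Finset.univ_nonempty (fun i' => t i' - x k i'))))
    (t : Fin N → ℝ) (z : Fin N → ℝ)
    (hz : z ∈ convexHull ℝ {w : Fin N → ℝ | ∃ y : ℕ → Fin N → ℝ,
        Filter.Tendsto y Filter.atTop (nhds t) ∧
        (∀ l, DifferentiableAt ℝ f (y l)) ∧
        Filter.Tendsto (fun l => (fun j => fderiv ℝ f (y l) (Pi.single j 1)))
          Filter.atTop (nhds w)})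
    (j : Fin N) (hzj : z j < 0) :
    ∃ k : Fin K, t j - x k j =
      Finset.univ.inf' Finset.univ_nonempty (fun i => t i - x k i) := by
  by_contra hcon
  push_neg at hcon
  set m : Fin K → ℝ := fun k => Finset.univ.inf' Finset.univ_nonempty (fun i => t i - x k i)
    with hm
  have hlt : ∀ k, m k < t j - x k j := fun k =>
    lt_of_le_of_ne (Finset.inf'_le _ (Finset.mem_univ j)) (hcon k).symm
  obtain ⟨ε, hε, hεk⟩ : ∃ ε : ℝ, 0 < ε ∧ ∀ k, 2 * ε ≤ t j - x k j - m k := by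
    rcases isEmpty_or_nonempty (Fin K) with h | h
    · exact ⟨1, one_pos, fun k => (h.false k).elim⟩
    · refine ⟨Finset.univ.inf' Finset.univ_nonempty (fun k => (t j - x k j - m k) / 4),
        ?_, ?_⟩
      · rw [Finset.lt_inf'_iff]
        intro k _
        have := hlt k
        linarith
      · intro k
        have h1 : Finset.univ.inf' Finset.univ_nonempty (fun k => (t j - x k j - m k) / 4)
            ≤ (t j - x k j - m k) / 4 := Finset.inf'_le _ (Finset.mem_univ k)
        have := hlt k
        linarith
  set e : Fin N → ℝ := Pi.single j (1:ℝ) with he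
  have hej : e j = 1 := Pi.single_eq_same j 1
  have hei : ∀ i, i ≠ j → e i = 0 := fun i hi => Pi.single_eq_of_ne hi 1
  -- key monotonicity
  have key : ∀ u : Fin N → ℝ, (∀ i, |u i - t i| < ε) → ∀ s : ℝ, 0 ≤ s →
      f u ≤ f (u + s • e) := by
    intro u hu s hs
    rw [hf, hf]
    apply hg
    intro k
    apply hγ
    set A : Fin N → ℝ := fun i => u i - x k i with hA
    set B : Fin N → ℝ := fun i => (u + s • e) i - x k i with hB
    have hBA : ∀ i, B i = A i + s * e i := by
      intro i; simp [hA, hB]; ring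
    have hAB : ∀ i, A i ≤ B i := by
      intro i
      rcases eq_or_ne i j with rfl | h
      · rw [hBA, hej]; linarith
      · rw [hBA, hei i h]; linarith
    obtain ⟨istar, _, histar⟩ := Finset.exists_mem_eq_inf' (Finset.univ_nonempty (α := Fin N))
      (fun i => t i - x k i)
    have hmk : m k = t istar - x k istar := histar
    have hstarne : istar ≠ j := by
      intro hh
      have h1 := hlt k
      rw [hmk, hh] at h1
      exact lt_irrefl _ h1
    have hAstar : A istar < m k + ε := by
      have := hu istar
      have h2 : u istar - t istar < ε := (abs_lt.1 this).2
      simp only [hA, hm, ← histar]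
      linarith
    have hinf : Finset.univ.inf' Finset.univ_nonempty B
        = Finset.univ.inf' Finset.univ_nonempty A := by
      apply le_antisymm
      · obtain ⟨i0, _, hi0⟩ := Finset.exists_mem_eq_inf' (Finset.univ_nonempty (α := Fin N)) A
        have hi0ne : i0 ≠ j := by
          intro hh
          have hAi0 : A i0 = u j - x k j := by rw [hh, hA]
          have h3 : -ε < u j - t j := (abs_lt.1 (hu j)).1
          have h4 : m k + 2 * ε ≤ t j - x k j := by have := hεk k; linarith
          have h5 : Finset.univ.inf' Finset.univ_nonempty A ≤ A istar :=
            Finset.inf'_le _ (Finset.mem_univ istar)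
          rw [← hi0] at hAi0
          have := hu j
          have h6 : u j - t j > -ε := (abs_lt.1 this).1
          -- A i0 = u j - x k j > t j - x k j - ε ≥ m k + ε
          -- but inf A ≤ A istar < m k + ε
          have : m k + ε < u j - x k j := by linarith
          linarith [hAi0, h5, hAstar]
        calc Finset.univ.inf' Finset.univ_nonempty B ≤ B i0 :=
              Finset.inf'_le _ (Finset.mem_univ i0)
          _ = A i0 := by rw [hBA, hei i0 hi0ne]; ring
          _ = Finset.univ.inf' Finset.univ_nonempty A := hi0.symm
      · exact Finset.le_inf' _ _ fun i _ =>
          le_trans (Finset.inf'_le _ (Finset.mem_univ i)) (hAB i)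
    intro i
    show A i - _ ≤ B i - _
    rw [hinf]
    linarith [hAB i]
  -- gradient nonneg at nearby differentiability points
  have grad_nonneg : ∀ y : Fin N → ℝ, dist y t < ε → DifferentiableAt ℝ f y →
      0 ≤ fderiv ℝ f y (Pi.single j 1) := by
    intro y hy hdy
    have hyc : ∀ i, |y i - t i| < ε := by
      intro i
      have := dist_le_pi_dist y t i
      rw [Real.dist_eq] at this
      linarith
    have hc : HasDerivAt (fun s : ℝ => y + s • e) e 0 := by
      simpa using ((hasDerivAt_id (0:ℝ)).smul_const e).const_add y
    have hφ : HasDerivAt (fun s : ℝ => f (y + s • e)) (fderiv ℝ f y (Pi.single j 1)) 0 := by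
      have hF : HasFDerivAt f (fderiv ℝ f y) ((fun s : ℝ => y + s • e) 0) := by
        simpa using hdy.hasFDerivAt
      have := hF.comp_hasDerivAt 0 hc
      exact this
    have htend : Filter.Tendsto (slope (fun s : ℝ => f (y + s • e)) 0) (nhdsWithin 0 (Set.Ioi 0))
        (nhds (fderiv ℝ f y (Pi.single j 1))) := by
      have h1 := (hφ.hasDerivWithinAt (s := Set.Ici (0:ℝ)))
      rw [hasDerivWithinAt_iff_tendsto_slope] at h1
      rwa [Set.Ici_sdiff_left] at h1
    refine ge_of_tendsto htend ?_
    filter_upwards [self_mem_nhdsWithin] with s hs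
    have hs' : (0:ℝ) < s := hs
    have hle : f (y + (0:ℝ) • e) ≤ f (y + s • e) := by
      have h2 : y + (0:ℝ) • e = y := by simp
      rw [h2]
      exact key y hyc s hs'.le
    have h2 : y + (0:ℝ) • e = y := by simp
    rw [slope_def_field]
    apply div_nonneg _ (by linarith)
    rw [h2] at hle
    have : f y ≤ f (y + s • e) := hle
    simp only [h2]
    linarith
  -- the set of limit gradients lies in the halfspace
  have hsub : {w : Fin N → ℝ | ∃ y : ℕ → Fin N → ℝ,
      Filter.Tendsto y Filter.atTop (nhds t) ∧
      (∀ l, DifferentiableAt ℝ f (y l)) ∧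
      Filter.Tendsto (fun l => (fun j => fderiv ℝ f (y l) (Pi.single j 1)))
        Filter.atTop (nhds w)} ⊆ {w : Fin N → ℝ | 0 ≤ w j} := by
    rintro w ⟨y, hyt, hyd, hyg⟩
    have hev : ∀ᶠ l in Filter.atTop, dist (y l) t < ε := by
      have := hyt (Metric.ball_mem_nhds t hε)
      filter_upwards [this] with l hl
      exact Metric.mem_ball.1 hl
    have htj : Filter.Tendsto (fun l => fderiv ℝ f (y l) (Pi.single j 1))
        Filter.atTop (nhds (w j)) := tendsto_pi_nhds.1 hyg j
    refine ge_of_tendsto htj ?_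
    filter_upwards [hev] with l hl
    exact grad_nonneg (y l) hl (hyd l)
  have hconv : Convex ℝ {w : Fin N → ℝ | 0 ≤ w j} :=
    convex_halfSpace_ge ⟨fun a b => rfl, fun c a => rfl⟩ 0
  have hzj' : 0 ≤ z j := convexHull_min hsub hconv hz
  linarith
end

section
/- Let G : ℝ^N → ℝ^N, let a_m > 0 be step sizes with Σ_{m≥1} a_m = ∞, and let (t_m) be the tropical descent sequence driven by G. Assume that for every m the vector G(t_m) has at least one strictly negative coordinate (as holds when G(t_m) ≠ 0 and Σ_{i≤N} G(t_m)_i = 0). Let U ⊆ ℝ^N have finite tropical diameter, i.e., sup_{u,u'∈U} d_tr(u,u') < ∞, and suppose there is a coordinate i such that G(u)_i = 0 for every u ∈ U. Then for every m with t_m ∈ U there exists n > m with t_n ∉ U; in particular no point of U is a limit of the sequence (t_m) that stays in U. -/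
/-- The tropical metric `d_tr(x,y) = max_i (x_i − y_i) − min_i (x_i − y_i)`. -/
noncomputable def trDist {N : ℕ} [NeZero N] (x y : Fin N → ℝ) : ℝ := trNorm (x - y)

/-- Instability of tropical descent on regions where some coordinate of the (generalized)
gradient vanishes identically: if `U` has finite tropical diameter, `G · i = 0` on `U`,
the step sizes are positive with divergent partial sums, and every `G (t m)` has a
strictly negative coordinate, then the tropical descent sequence leaves `U` after any
time at which it is in `U`. -/
theorem stmt2 {N : ℕ} [NeZero N] (G : (Fin N → ℝ) → (Fin N → ℝ))
    (a : ℕ → ℝ) (ha : ∀ m, 1 ≤ m → 0 < a m)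
    (hdiv : Filter.Tendsto (fun m => ∑ n ∈ Finset.Icc 1 m, a n) Filter.atTop Filter.atTop)
    (t : ℕ → Fin N → ℝ)
    (hstep : ∀ m : ℕ, t (m + 1) =
      t m + a (m + 1) • (fun i => if G (t m) i < 0 then (1 : ℝ) else 0))
    (hneg : ∀ m, ∃ i, G (t m) i < 0)
    (U : Set (Fin N → ℝ)) (C : ℝ) (hC : ∀ u ∈ U, ∀ u' ∈ U, trDist u u' ≤ C)
    (i : Fin N) (hGi : ∀ u ∈ U, G u i = 0) :
    ∀ m, t m ∈ U → ∃ n, m < n ∧ t n ∉ U := by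
  intro m hm
  by_contra h
  push_neg at h
  have hU : ∀ n, m ≤ n → t n ∈ U := by
    intro n hn
    rcases eq_or_lt_of_le hn with rfl | hlt
    · exact hm
    · exact h n hlt
  have key : ∀ n, m ≤ n → (t n i = t m i ∧ (∀ k, t m k ≤ t n k) ∧
      ∑ j ∈ Finset.Ioc m n, a j + ∑ k, t m k ≤ ∑ k, t n k) := by
    intro n hn
    induction n, hn using Nat.le_induction with
    | base => simp
    | succ n hn ih =>
      obtain ⟨h1, h2, h3⟩ := ih
      have hmem := hU n hn
      have ha' : 0 < a (n+1) := ha _ (Nat.succ_le_succ (Nat.zero_le n))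
      have hstep' := hstep n
      have happ : ∀ k, t (n+1) k = t n k + a (n+1) * (if G (t n) k < 0 then (1:ℝ) else 0) := by
        intro k; rw [hstep']; simp
      refine ⟨?_, ?_, ?_⟩
      · rw [happ i, hGi _ hmem]; simp [h1]
      · intro k
        have : (0:ℝ) ≤ a (n+1) * (if G (t n) k < 0 then (1:ℝ) else 0) := by
          split <;> simp [le_of_lt ha']
        rw [happ k]
        linarith [h2 k]
      · obtain ⟨j, hj⟩ := hneg n
        have hsum1 : (1:ℝ) ≤ ∑ k, (if G (t n) k < 0 then (1:ℝ) else 0) := by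
          have := Finset.single_le_sum (f := fun k => if G (t n) k < 0 then (1:ℝ) else 0)
            (fun k _ => by split <;> norm_num) (Finset.mem_univ j)
          simpa [hj] using this
        have hsumstep : ∑ k, t (n+1) k
            = ∑ k, t n k + a (n+1) * ∑ k, (if G (t n) k < 0 then (1:ℝ) else 0) := by
          rw [Finset.mul_sum, ← Finset.sum_add_distrib]
          exact Finset.sum_congr rfl fun k _ => happ k
        have hIoc : ∑ j ∈ Finset.Ioc m (n+1), a j
            = ∑ j ∈ Finset.Ioc m n, a j + a (n+1) := by
          rw [← Finset.sum_Ioc_succ_top hn]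
        have : a (n+1) * 1 ≤ a (n+1) * ∑ k, (if G (t n) k < 0 then (1:ℝ) else 0) :=
          mul_le_mul_of_nonneg_left hsum1 (le_of_lt ha')
        rw [hIoc, hsumstep]; linarith
  -- choose n large
  have hN : 0 < N := Nat.pos_of_ne_zero (NeZero.ne N)
  have hev : ∀ᶠ n in Filter.atTop,
      (N : ℝ) * C + ∑ j ∈ Finset.Icc 1 m, a j < ∑ j ∈ Finset.Icc 1 n, a j :=
    hdiv.eventually (Filter.eventually_gt_atTop _)
  obtain ⟨n, hbig, hnm⟩ := (hev.and (Filter.eventually_ge_atTop m)).exists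
  have hsplit : ∑ j ∈ Finset.Icc 1 m, a j + ∑ j ∈ Finset.Ioc m n, a j
      = ∑ j ∈ Finset.Icc 1 n, a j := by
    rw [show Finset.Icc 1 m = Finset.Ioc 0 m from rfl,
        show Finset.Icc 1 n = Finset.Ioc 0 n from rfl]
    exact Finset.sum_Ioc_consecutive _ (Nat.zero_le m) hnm
  have hS : (N : ℝ) * C < ∑ j ∈ Finset.Ioc m n, a j := by linarith
  obtain ⟨h1, h2, h3⟩ := key n hnm
  -- now bound trDist
  have hd := hC _ (hU n hnm) _ hm
  have hinf : Finset.univ.inf' Finset.univ_nonempty (t n - t m) ≤ 0 := by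
    have := Finset.inf'_le (t n - t m) (Finset.mem_univ i)
    refine le_trans this (le_of_eq ?_)
    simp [h1]
  have hsup : ∑ k, (t n k - t m k) ≤ (N : ℝ) *
      Finset.univ.sup' Finset.univ_nonempty (t n - t m) := by
    have := Finset.sum_le_card_nsmul Finset.univ (t n - t m)
      (Finset.univ.sup' Finset.univ_nonempty (t n - t m))
      (fun k _ => Finset.le_sup' _ (Finset.mem_univ k))
    simpa [nsmul_eq_mul, Pi.sub_apply] using this
  have hsumge : (N : ℝ) * C < ∑ k, (t n k - t m k) := by
    rw [Finset.sum_sub_distrib]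
    linarith
  have : (N : ℝ) * C < (N : ℝ) * trDist (t n) (t m) := by
    have hNpos : (0:ℝ) < N := by exact_mod_cast hN
    unfold trDist trNorm
    nlinarith
  have hNpos : (0:ℝ) < N := by exact_mod_cast hN
  have : C < trDist (t n) (t m) := lt_of_mul_lt_mul_left this (le_of_lt hNpos)
  linarith
end

section
/- Let x_1,…,x_K ∈ ℝ^N and let G : ℝ^N → ℝ^N satisfy the min-descent assumption for x_1,…,x_K. Let (t_m) be the tropical descent sequence driven by G with step sizes a_m > 0, and assume that for every m ≥ 0, G(t_m) ≠ 0 and Σ_{i≤N} G(t_m)_i = 0. Let V be the max-tropical convex hull of x_1,…,x_K. Fix ε > 0; let M_1 be such that a_m < ε/N for all m ≥ M_1, and let M_2 ≥ M_1 be such that s_m ≥ max_{j≤N} Δ_j(t_{M_1}) + s_{M_1} − K·ε for all m ≥ M_2. Then d_tr(t_m, V) ≤ ε for all m ≥ M_2. -/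
/-- The max-tropical convex hull of the points `x 1, …, x K`:
`V = {t : ∃ λ, t j = max_k (λ_k + x_{k j}) for all j}`. -/
def tconvMax {N K : ℕ} [NeZero K] (x : Fin K → Fin N → ℝ) : Set (Fin N → ℝ) :=
  {t | ∃ lam : Fin K → ℝ, ∀ j,
    t j = Finset.univ.sup' Finset.univ_nonempty (fun k => lam k + x k j)}

/-- `Δ_j(t) = Σ_{k ≤ K} Σ_{i ≤ N} [t_j − x_{k j} − t_i + x_{k i}]⁺`. -/
def Delta {N K : ℕ} (x : Fin K → Fin N → ℝ) (j : Fin N) (t : Fin N → ℝ) : ℝ :=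
  ∑ k, ∑ i, max (t j - x k j - t i + x k i) 0

/-- Convergence of tropical descent to the max-tropical convex hull of the data:
after `M₂` steps (where `M₁, M₂` are as described), the sequence is within tropical
distance `ε` of `V = tconv_max(x₁, …, x_K)`. -/
theorem stmt3 {N K : ℕ} [NeZero N] [NeZero K]
    (x : Fin K → Fin N → ℝ) (G : (Fin N → ℝ) → (Fin N → ℝ))
    (hG : ∀ t j, G t j < 0 → ∃ k, t j - x k j =
      Finset.univ.inf' Finset.univ_nonempty (fun i => t i - x k i))
    (a : ℕ → ℝ) (ha : ∀ m, 1 ≤ m → 0 < a m)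
    (t : ℕ → Fin N → ℝ)
    (hstep : ∀ m : ℕ, t (m + 1) =
      t m + a (m + 1) • (fun i => if G (t m) i < 0 then (1 : ℝ) else 0))
    (hGne : ∀ m, G (t m) ≠ 0) (hGsum : ∀ m, ∑ i, G (t m) i = 0)
    (ε : ℝ) (hε : 0 < ε)
    (M₁ M₂ : ℕ) (hM : M₁ ≤ M₂)
    (hM₁ : ∀ m, M₁ ≤ m → a m < ε / N)
    (hM₂ : ∀ m, M₂ ≤ m → (∑ n ∈ Finset.Icc 1 m, a n) ≥
      Finset.univ.sup' Finset.univ_nonempty (fun j => Delta x j (t M₁)) +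
        (∑ n ∈ Finset.Icc 1 M₁, a n) - K * ε) :
    ∀ m, M₂ ≤ m → sInf ((fun v => trDist (t m) v) '' tconvMax x) ≤ ε := by
  classical
  have hNpos : 0 < (N : ℝ) := by exact_mod_cast Nat.pos_of_ne_zero (NeZero.ne N)
  intro m hm
  -- pointwise step formula
  have hstep' : ∀ n (j : Fin N), t (n + 1) j
      = t n j + a (n + 1) * (if G (t n) j < 0 then 1 else 0) := by
    intro n j
    have h := congrFun (hstep n) j
    simpa [Pi.add_apply, Pi.smul_apply, smul_eq_mul] using h
  have hapos : ∀ n : ℕ, 0 < a (n + 1) := fun n => ha (n + 1) (Nat.succ_le_succ (Nat.zero_le n))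
  -- monotonicity of coordinates along steps
  have hmono : ∀ n (i : Fin N), t n i ≤ t (n + 1) i := by
    intro n i
    rw [hstep' n i]
    have : (0:ℝ) ≤ a (n+1) * (if G (t n) i < 0 then 1 else 0) := by
      have := (hapos n).le
      split <;> nlinarith
    linarith
  -- the block sums
  set B : Fin N → Fin K → ℕ → ℝ :=
    fun j k n => ∑ i, max (t n j - x k j - t n i + x k i) 0 with hBdef
  have hBnonneg : ∀ j k n, 0 ≤ B j k n := fun j k n =>
    Finset.sum_nonneg fun i _ => le_max_right _ _
  -- existence of a descending coordinate
  have hneg : ∀ n, ∃ i, G (t n) i < 0 := by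
    intro n
    by_contra h
    push_neg at h
    apply hGne n
    funext i
    exact (Finset.sum_eq_zero_iff_of_nonneg (fun i _ => h i)).mp (hGsum n) i (Finset.mem_univ i)
  -- (A) if j descends at step n, some block is ≤ N * a (n+1) afterwards
  have hA : ∀ n (j : Fin N), G (t n) j < 0 → ∃ k, B j k (n + 1) ≤ N * a (n + 1) := by
    intro n j hj
    obtain ⟨k, hk⟩ := hG (t n) j hj
    refine ⟨k, ?_⟩
    have hterm : ∀ i : Fin N, max (t (n+1) j - x k j - t (n+1) i + x k i) 0 ≤ a (n+1) := by
      intro i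
      have h1 : t n j - x k j ≤ t n i - x k i := by
        rw [hk]; exact Finset.inf'_le _ (Finset.mem_univ i)
      have h2 : t (n+1) j = t n j + a (n+1) := by
        rw [hstep' n j, if_pos hj]; ring
      have h3 := hmono n i
      have h4 := (hapos n).le
      apply max_le _ h4
      linarith
    calc B j k (n+1) ≤ ∑ _i : Fin N, a (n+1) := Finset.sum_le_sum fun i _ => hterm i
    _ = N * a (n+1) := by simp [Finset.sum_const, Finset.card_univ, nsmul_eq_mul]
  -- (B) if j does not descend, no block increases
  have hB0 : ∀ n (j : Fin N), ¬ G (t n) j < 0 → ∀ k, B j k (n + 1) ≤ B j k n := by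
    intro n j hj k
    apply Finset.sum_le_sum
    intro i _
    have h2 : t (n+1) j = t n j := by rw [hstep' n j, if_neg hj]; ring
    have h3 := hmono n i
    apply max_le _ (le_max_right _ _)
    have : t (n+1) j - x k j - t (n+1) i + x k i ≤ t n j - x k j - t n i + x k i := by linarith
    exact this.trans (le_max_left _ _)
  -- (C) if j does not descend and all blocks are > ε, the total decreases by a(n+1)
  have hC : ∀ n (j : Fin N), ¬ G (t n) j < 0 → (∀ k, ε < B j k n) → a (n + 1) < ε / N →
      (∑ k, B j k (n + 1)) ≤ (∑ k, B j k n) - a (n + 1) := by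
    intro n j hj hbig hstepsz
    obtain ⟨i₀, hi₀⟩ := hneg n
    obtain ⟨k₀, hk₀⟩ := hG (t n) i₀ hi₀
    -- the (k₀,i₀) term dominates block k₀
    have hdom : ∀ l : Fin N, max (t n j - x k₀ j - t n l + x k₀ l) 0
        ≤ t n j - x k₀ j - t n i₀ + x k₀ i₀ := by
      intro l
      have h1 : t n i₀ - x k₀ i₀ ≤ t n l - x k₀ l := by
        rw [hk₀]; exact Finset.inf'_le _ (Finset.mem_univ l)
      have h2 : t n i₀ - x k₀ i₀ ≤ t n j - x k₀ j := by
        rw [hk₀]; exact Finset.inf'_le _ (Finset.mem_univ j)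
      apply max_le <;> linarith
    have hbigterm : a (n+1) ≤ t n j - x k₀ j - t n i₀ + x k₀ i₀ := by
      have h5 : B j k₀ n ≤ N * (t n j - x k₀ j - t n i₀ + x k₀ i₀) := by
        calc B j k₀ n ≤ ∑ _l : Fin N, (t n j - x k₀ j - t n i₀ + x k₀ i₀) :=
              Finset.sum_le_sum fun l _ => hdom l
        _ = N * _ := by
              rw [Finset.sum_const, Finset.card_univ, Fintype.card_fin, nsmul_eq_mul]
      have h6 := hbig k₀
      have h7 : (N:ℝ) * a (n+1) < ε := by
        rw [lt_div_iff₀ hNpos] at hstepsz; linarith [hstepsz]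
      nlinarith
    -- block k₀ decreases by a(n+1)
    have hkdec : B j k₀ (n + 1) ≤ B j k₀ n - a (n + 1) := by
      have h2 : t (n+1) j = t n j := by rw [hstep' n j, if_neg hj]; ring
      have hi₀step : t (n+1) i₀ = t n i₀ + a (n+1) := by
        rw [hstep' n i₀, if_pos hi₀]; ring
      have key : max (t (n+1) j - x k₀ j - t (n+1) i₀ + x k₀ i₀) 0
          ≤ max (t n j - x k₀ j - t n i₀ + x k₀ i₀) 0 - a (n+1) := by
        have hge : max (t n j - x k₀ j - t n i₀ + x k₀ i₀) 0
            = t n j - x k₀ j - t n i₀ + x k₀ i₀ :=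
          max_eq_left (le_trans (hapos n).le hbigterm)
        rw [hge]
        apply max_le
        · rw [h2, hi₀step]; ring_nf; linarith
        · linarith
      have hrest : ∀ i ∈ Finset.univ.erase i₀,
          max (t (n+1) j - x k₀ j - t (n+1) i + x k₀ i) 0
            ≤ max (t n j - x k₀ j - t n i + x k₀ i) 0 := by
        intro i _
        have h3 := hmono n i
        apply max_le _ (le_max_right _ _)
        have : t (n+1) j - x k₀ j - t (n+1) i + x k₀ i ≤ t n j - x k₀ j - t n i + x k₀ i := by
          rw [h2]; linarith
        exact this.trans (le_max_left _ _)
      have e1 := Finset.sum_erase_add Finset.univ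
        (fun i => max (t (n+1) j - x k₀ j - t (n+1) i + x k₀ i) 0) (Finset.mem_univ i₀)
      have e2 := Finset.sum_erase_add Finset.univ
        (fun i => max (t n j - x k₀ j - t n i + x k₀ i) 0) (Finset.mem_univ i₀)
      have hsum := Finset.sum_le_sum hrest
      simp only [hBdef]
      rw [← e1, ← e2]
      linarith
    have e1 := Finset.sum_erase_add Finset.univ (fun k => B j k (n+1)) (Finset.mem_univ k₀)
    have e2 := Finset.sum_erase_add Finset.univ (fun k => B j k n) (Finset.mem_univ k₀)
    have hsum : ∑ k ∈ Finset.univ.erase k₀, B j k (n+1)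
        ≤ ∑ k ∈ Finset.univ.erase k₀, B j k n :=
      Finset.sum_le_sum fun k _ => hB0 n j hj k
    rw [← e1, ← e2]
    linarith
  -- Claim 1: forward invariance of "some block ≤ ε" after M₁
  have hinv : ∀ (j : Fin N) (p q : ℕ), M₁ ≤ p → p ≤ q →
      (∃ k, B j k p ≤ ε) → ∃ k, B j k q ≤ ε := by
    intro j p q hp hpq
    induction q, hpq using Nat.le_induction with
    | base => exact id
    | succ q hpq ih =>
      intro h
      obtain ⟨k, hk⟩ := ih h
      by_cases hd : G (t q) j < 0
      · obtain ⟨k', hk'⟩ := hA q j hd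
        refine ⟨k', hk'.trans ?_⟩
        have h7 := hM₁ (q+1) (le_trans hp (Nat.le_succ_of_le hpq))
        rw [lt_div_iff₀ hNpos] at h7
        linarith
      · exact ⟨k, (hB0 q j hd k).trans hk⟩
  -- Claim 2: by time m ≥ M₂ some block must have gotten ≤ ε at some point in [M₁, m]
  have hM₁m : M₁ ≤ m := le_trans hM hm
  have hexists : ∀ j : Fin N, ∃ n, M₁ ≤ n ∧ n ≤ m ∧ ∃ k, B j k n ≤ ε := by
    intro j
    by_contra hcon
    push_neg at hcon
    have hbig : ∀ n, M₁ ≤ n → n ≤ m → ∀ k, ε < B j k n := hcon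
    -- j never descends in [M₁, m)
    have hd : ∀ n, M₁ ≤ n → n < m → ¬ G (t n) j < 0 := by
      intro n hn hnm hneg'
      obtain ⟨k, hk⟩ := hG (t n) j hneg'
      have hzero : B j k n ≤ 0 := by
        have hterm : ∀ i ∈ Finset.univ, max (t n j - x k j - t n i + x k i) 0 ≤ (0:ℝ) := by
          intro i _
          have h1 : t n j - x k j ≤ t n i - x k i := by
            rw [hk]; exact Finset.inf'_le _ (Finset.mem_univ i)
          apply max_le _ le_rfl
          linarith
        calc B j k n ≤ ∑ _i : Fin N, (0:ℝ) := Finset.sum_le_sum hterm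
        _ = 0 := by simp
      exact absurd (hbig n hn hnm.le k) (by linarith)
    -- total decrease
    have hdesc : ∀ p, M₁ ≤ p → p ≤ m →
        (∑ k, B j k p) ≤ (∑ k, B j k M₁) - ∑ n ∈ Finset.Icc (M₁ + 1) p, a n := by
      intro p hp
      induction p, hp using Nat.le_induction with
      | base => intro _; simp
      | succ p hp ih =>
        intro hpm
        have hpm' : p ≤ m := Nat.le_of_succ_le hpm
        have step := hC p j (hd p hp (Nat.lt_of_succ_le hpm)) (hbig p hp hpm')
          (hM₁ (p+1) (Nat.le_succ_of_le hp))
        rw [Finset.sum_Icc_succ_top (Nat.succ_le_succ hp)]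
        have := ih hpm'
        linarith
    have hfinal := hdesc m hM₁m le_rfl
    -- the sum of steps equals s_m - s_{M₁}
    have hicc : ∑ n ∈ Finset.Icc 1 M₁, a n + ∑ n ∈ Finset.Icc (M₁ + 1) m, a n
        = ∑ n ∈ Finset.Icc 1 m, a n := by
      rw [show Finset.Icc 1 M₁ = Finset.Ioc 0 M₁ from Finset.Icc_add_one_left_eq_Ioc 0 M₁,
        show Finset.Icc (M₁+1) m = Finset.Ioc M₁ m from Finset.Icc_add_one_left_eq_Ioc M₁ m,
        show Finset.Icc 1 m = Finset.Ioc 0 m from Finset.Icc_add_one_left_eq_Ioc 0 m]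
      exact Finset.sum_Ioc_consecutive a (Nat.zero_le M₁) hM₁m
    have hsup : Delta x j (t M₁) ≤
        Finset.univ.sup' Finset.univ_nonempty (fun j => Delta x j (t M₁)) :=
      Finset.le_sup' (fun j => Delta x j (t M₁)) (Finset.mem_univ j)
    have hDelta : Delta x j (t M₁) = ∑ k, B j k M₁ := rfl
    have hs := hM₂ m hm
    have hlb : (K:ℝ) * ε < ∑ k, B j k m := by
      have := Finset.sum_lt_sum_of_nonempty (Finset.univ_nonempty (α := Fin K))
        (f := fun _ => ε) (g := fun k => B j k m) (fun k _ => hbig m hM₁m le_rfl k)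
      simpa [Finset.sum_const, Finset.card_univ, nsmul_eq_mul] using this
    linarith
  -- so at time m, for every j some block is ≤ ε
  have hfin : ∀ j : Fin N, ∃ k, B j k m ≤ ε := by
    intro j
    obtain ⟨n, hn1, hn2, hk⟩ := hexists j
    exact hinv j n m hn1 hn2 hk
  -- construct the projection point v ∈ V
  set lam : Fin K → ℝ := fun k => Finset.univ.inf' Finset.univ_nonempty (fun i => t m i - x k i)
    with hlam
  set v : Fin N → ℝ := fun j => Finset.univ.sup' Finset.univ_nonempty (fun k => lam k + x k j)
    with hv
  have hvV : v ∈ tconvMax x := ⟨lam, fun j => rfl⟩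
  have hle : ∀ j, v j ≤ t m j := by
    intro j
    apply Finset.sup'_le
    intro k _
    have h1 : lam k ≤ t m j - x k j := Finset.inf'_le _ (Finset.mem_univ j)
    linarith
  have hub : ∀ j, t m j - v j ≤ ε := by
    intro j
    obtain ⟨k, hk⟩ := hfin j
    have h1 : lam k + x k j ≤ v j := by
      simp only [hv]
      exact Finset.le_sup' (fun k => lam k + x k j) (Finset.mem_univ k)
    obtain ⟨i₀, -, hi₀⟩ := Finset.exists_mem_eq_inf' (Finset.univ_nonempty (α := Fin N))
      (fun i => t m i - x k i)
    have h2 : max (t m j - x k j - t m i₀ + x k i₀) 0 ≤ B j k m := by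
      simp only [hBdef]
      exact Finset.single_le_sum (f := fun i => max (t m j - x k j - t m i + x k i) 0)
        (fun i _ => le_max_right _ _) (Finset.mem_univ i₀)
    have h3 : t m j - x k j - t m i₀ + x k i₀ ≤ max (t m j - x k j - t m i₀ + x k i₀) 0 :=
      le_max_left _ _
    have h4 : lam k = t m i₀ - x k i₀ := hi₀
    linarith
  have hdist : trDist (t m) v ≤ ε := by
    unfold trDist trNorm
    have hsup : Finset.univ.sup' Finset.univ_nonempty (t m - v) ≤ ε :=
      Finset.sup'_le _ _ fun j _ => by simpa [Pi.sub_apply] using hub j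
    have hinf : 0 ≤ Finset.univ.inf' Finset.univ_nonempty (t m - v) :=
      Finset.le_inf' _ _ fun j _ => by
        have := hle j; simp only [Pi.sub_apply]; linarith
    linarith
  -- conclude via sInf
  have hbdd : BddBelow ((fun v => trDist (t m) v) '' tconvMax x) := by
    refine ⟨0, ?_⟩
    rintro y ⟨w, -, rfl⟩
    unfold trDist trNorm
    have hj : (0 : Fin N) = 0 := rfl
    have h1 : Finset.univ.inf' Finset.univ_nonempty (t m - w)
        ≤ Finset.univ.sup' Finset.univ_nonempty (t m - w) :=
      le_trans (Finset.inf'_le _ (Finset.mem_univ (Classical.arbitrary (Fin N))))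
        (Finset.le_sup' _ (Finset.mem_univ _))
    simpa using sub_nonneg.mpr h1
  exact le_trans (csInf_le hbdd ⟨v, hvV, rfl⟩) hdist
end

section
/- Let f : ℝ^N → ℝ be Δ_min-star-quasi-convex with kernel v ∈ ℝ^N, and let G : ℝ^N → ℝ^N satisfy the min-descent assumption for the single data point v, i.e., G(t)_j < 0 implies t_j − v_j = min_{i≤N}(t_i − v_i). Let (t_m) be the tropical descent sequence driven by G with step sizes a_m > 0, and assume that for every m, G(t_m) ≠ 0 and Σ_{i≤N} G(t_m)_i = 0. Fix ε > 0; let M_1 be such that a_m < ε/N for all m ≥ M_1, and let M_2 ≥ M_1 be such that s_m ≥ max_{j≤N} Σ_{i≤N}[(t_{M_1})_j − v_j − (t_{M_1})_i + v_i]^+ + s_{M_1} − ε for all m ≥ M_2. Then v is a global minimum of f and d_tr(t_m, v) ≤ ε for all m ≥ M_2. -/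
/-- Global solvability of `Δ_min`-star-quasi-convex problems by tropical descent:
if `f t = γ((t − v) − min_i(t_i − v_i)·𝟏)` with `γ` nondecreasing, and `G` satisfies the
min-descent assumption for the single data point `v`, then `v` is a global minimum of `f`
and the tropical descent sequence is within `ε` of `v` for all `m ≥ M₂`. -/
theorem stmt4 {N : ℕ} [NeZero N] (f : (Fin N → ℝ) → ℝ) (v : Fin N → ℝ)
    (γ : (Fin N → ℝ) → ℝ) (hγ : Monotone γ)
    (hf : ∀ t, f t = γ (fun i =>
      (t i - v i) - Finset.univ.inf' Finset.univ_nonempty (fun i' => t i' - v i')))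
    (G : (Fin N → ℝ) → (Fin N → ℝ))
    (hG : ∀ t j, G t j < 0 →
      t j - v j = Finset.univ.inf' Finset.univ_nonempty (fun i => t i - v i))
    (a : ℕ → ℝ) (ha : ∀ m, 1 ≤ m → 0 < a m)
    (t : ℕ → Fin N → ℝ)
    (hstep : ∀ m : ℕ, t (m + 1) =
      t m + a (m + 1) • (fun i => if G (t m) i < 0 then (1 : ℝ) else 0))
    (hGne : ∀ m, G (t m) ≠ 0) (hGsum : ∀ m, ∑ i, G (t m) i = 0)
    (ε : ℝ) (hε : 0 < ε)
    (M₁ M₂ : ℕ) (hM : M₁ ≤ M₂)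
    (hM₁ : ∀ m, M₁ ≤ m → a m < ε / N)
    (hM₂ : ∀ m, M₂ ≤ m → (∑ n ∈ Finset.Icc 1 m, a n) ≥
      Finset.univ.sup' Finset.univ_nonempty
        (fun j => ∑ i, max (t M₁ j - v j - t M₁ i + v i) 0) +
        (∑ n ∈ Finset.Icc 1 M₁, a n) - ε) :
    (∀ s, f v ≤ f s) ∧ ∀ m, M₂ ≤ m → trDist (t m) v ≤ ε := by
  have hN : 0 < (N : ℝ) := by
    have := NeZero.pos N
    exact_mod_cast this
  constructor
  · -- global minimality of v
    intro s
    rw [hf, hf]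
    apply hγ
    intro i
    have h1 : (fun i' => v i' - v i') = fun _ => (0 : ℝ) := by funext i'; ring
    have h2 : Finset.univ.inf' Finset.univ_nonempty (fun i' => v i' - v i') = 0 := by
      rw [h1, Finset.inf'_const]
    have h3 : Finset.univ.inf' Finset.univ_nonempty (fun i' => s i' - v i') ≤ s i - v i :=
      Finset.inf'_le _ (Finset.mem_univ i)
    dsimp only
    rw [h2]
    linarith
  · -- convergence
    intro m hm
    -- notation: F n j is the potential
    set F : ℕ → Fin N → ℝ := fun n j => ∑ i, max (t n j - v j - t n i + v i) 0 with hF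
    -- basic step facts
    have hstep' : ∀ n i, t (n + 1) i = t n i + (if G (t n) i < 0 then a (n + 1) else 0) := by
      intro n i
      rw [hstep n]
      simp [mul_ite]
    have ha' : ∀ n : ℕ, 0 < a (n + 1) := fun n => ha (n + 1) (by omega)
    have hmono : ∀ n i, t n i ≤ t (n + 1) i := by
      intro n i
      rw [hstep' n i]
      split <;> [linarith [ha' n]; linarith]
    have hIle : ∀ n i, Finset.univ.inf' Finset.univ_nonempty (fun i => t n i - v i)
        ≤ t n i - v i := fun n i => Finset.inf'_le _ (Finset.mem_univ i)
    have hneg : ∀ n, ∃ i, G (t n) i < 0 := by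
      intro n
      by_contra h
      push_neg at h
      apply hGne n
      funext i
      have := (Finset.sum_eq_zero_iff_of_nonneg (fun i _ => h i)).mp (hGsum n) i
        (Finset.mem_univ i)
      simpa using this
    -- key one-step lemma
    have key : ∀ n j, F (n + 1) j ≤ max (F n j - a (n + 1)) ((N : ℝ) * a (n + 1)) := by
      intro n j
      set I := Finset.univ.inf' Finset.univ_nonempty (fun i => t n i - v i) with hI
      by_cases hcase : t n j - v j - I < a (n + 1)
      · -- gap small : F (n+1) j ≤ N * a (n+1)
        refine le_trans ?_ (le_max_right _ _)
        have hub : t (n + 1) j - v j ≤ I + a (n + 1) := by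
          rw [hstep' n j]
          split_ifs with hmov
          · have := hG (t n) j hmov
            rw [← hI] at this
            linarith
          · linarith
        have hterm : ∀ i : Fin N, max (t (n+1) j - v j - t (n+1) i + v i) 0 ≤ a (n + 1) := by
          intro i
          have h1 : I ≤ t (n + 1) i - v i := le_trans (hIle n i) (by linarith [hmono n i])
          exact max_le (by linarith) (le_of_lt (ha' n))
        calc F (n + 1) j ≤ ∑ _i : Fin N, a (n + 1) := Finset.sum_le_sum fun i _ => hterm i
          _ = (N : ℝ) * a (n + 1) := by
              rw [Finset.sum_const, Finset.card_univ, Fintype.card_fin, nsmul_eq_mul]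
      · -- gap large : F decreases by a (n+1)
        refine le_trans ?_ (le_max_left _ _)
        push_neg at hcase
        -- j does not move
        have hjstay : ¬ G (t n) j < 0 := by
          intro hmov
          have := hG (t n) j hmov
          rw [← hI] at this
          have := ha' n
          linarith
        have hjval : t (n + 1) j = t n j := by rw [hstep' n j, if_neg hjstay]; ring
        obtain ⟨i₀, hi₀⟩ := hneg n
        have hi₀min : t n i₀ - v i₀ = I := by rw [hI]; exact hG (t n) i₀ hi₀
        have hi₀val : t (n + 1) i₀ = t n i₀ + a (n + 1) := by
          rw [hstep' n i₀, if_pos hi₀]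
        have hother : ∀ i : Fin N,
            max (t (n+1) j - v j - t (n+1) i + v i) 0 ≤ max (t n j - v j - t n i + v i) 0 := by
          intro i
          have := hmono n i
          exact max_le (le_max_of_le_left (by rw [hjval]; linarith)) (le_max_right _ _)
        have hI0 : 0 < a (n + 1) := ha' n
        have h0 : t n j - v j - t n i₀ + v i₀ = t n j - v j - I := by linarith
        have hterm₀ : max (t (n+1) j - v j - t (n+1) i₀ + v i₀) 0
            = max (t n j - v j - t n i₀ + v i₀) 0 - a (n + 1) := by
          rw [hjval, hi₀val]
          rw [max_eq_left (by linarith), max_eq_left (by linarith)]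
          ring
        have e1 := Finset.sum_erase_add Finset.univ
          (fun i => max (t (n+1) j - v j - t (n+1) i + v i) 0) (Finset.mem_univ i₀)
        have e2 := Finset.sum_erase_add Finset.univ
          (fun i => max (t n j - v j - t n i + v i) 0) (Finset.mem_univ i₀)
        have hsum : ∑ i ∈ Finset.univ.erase i₀,
              max (t (n+1) j - v j - t (n+1) i + v i) 0
            ≤ ∑ i ∈ Finset.univ.erase i₀, max (t n j - v j - t n i + v i) 0 :=
          Finset.sum_le_sum fun i _ => hother i
        simp only [hF]
        rw [← e1, ← e2]
        rw [hterm₀]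
        linarith
    -- partial sums
    have hS : ∀ n : ℕ, (∑ k ∈ Finset.Icc 1 (n + 1), a k)
        = (∑ k ∈ Finset.Icc 1 n, a k) + a (n + 1) := by
      intro n
      exact Finset.sum_Icc_succ_top (by omega) a
    -- induction from M₁
    have ind : ∀ n, M₁ ≤ n → ∀ j, F n j ≤
        max (F M₁ j - ((∑ k ∈ Finset.Icc 1 n, a k) - (∑ k ∈ Finset.Icc 1 M₁, a k))) ε := by
      intro n
      induction n with
      | zero =>
        intro h j
        have : M₁ = 0 := by omega
        subst this
        simpa using le_max_left _ _
      | succ n ih =>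
        intro h j
        rcases Nat.lt_or_ge n M₁ with h' | h'
        · have : M₁ = n + 1 := by omega
          subst this
          simpa using le_max_left _ _
        · have hNa : (N : ℝ) * a (n + 1) < ε := by
            have := hM₁ (n + 1) (by omega)
            rw [lt_div_iff₀ hN] at this
            linarith
          have h1 := key n j
          have h2 := ih h' j
          rw [hS n]
          rcases max_cases (F M₁ j - ((∑ k ∈ Finset.Icc 1 n, a k)
              - (∑ k ∈ Finset.Icc 1 M₁, a k))) ε with ⟨hm1, _⟩ | ⟨hm1, _⟩ <;>
          rcases max_cases (F n j - a (n + 1)) ((N : ℝ) * a (n + 1)) with ⟨hm2, _⟩ | ⟨hm2, _⟩ <;>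
          [skip; skip; skip; skip] <;>
          · rw [hm2] at h1
            rw [hm1] at h2
            rcases le_max_iff.mpr (Or.inl (le_refl (F M₁ j - ((∑ k ∈ Finset.Icc 1 n, a k)
              + a (n + 1) - (∑ k ∈ Finset.Icc 1 M₁, a k))))) with h3
            have h4 : ε ≤ max (F M₁ j - ((∑ k ∈ Finset.Icc 1 n, a k)
              + a (n + 1) - (∑ k ∈ Finset.Icc 1 M₁, a k))) ε := le_max_right _ _
            have := ha' n
            first
            | linarith [h3]
            | linarith [h4]
    -- conclude : F m j ≤ ε for all j
    have hFm : ∀ j, F m j ≤ ε := by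
      intro j
      have h1 := ind m (le_trans hM hm) j
      have h2 : F M₁ j ≤ Finset.univ.sup' Finset.univ_nonempty
          (fun j => ∑ i, max (t M₁ j - v j - t M₁ i + v i) 0) :=
        Finset.le_sup' _ (Finset.mem_univ j)
      have h3 := hM₂ m hm
      have h4 : F M₁ j - ((∑ k ∈ Finset.Icc 1 m, a k) - (∑ k ∈ Finset.Icc 1 M₁, a k)) ≤ ε := by
        linarith
      rcases max_cases (F M₁ j - ((∑ k ∈ Finset.Icc 1 m, a k)
          - (∑ k ∈ Finset.Icc 1 M₁, a k))) ε with ⟨hm1, _⟩ | ⟨hm1, _⟩ <;>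
        rw [hm1] at h1 <;> linarith
    -- finally bound the tropical distance
    rw [trDist, trNorm]
    obtain ⟨j, -, hj⟩ := Finset.exists_mem_eq_sup' (Finset.univ_nonempty) (t m - v)
    obtain ⟨i, -, hi⟩ := Finset.exists_mem_eq_inf' (Finset.univ_nonempty) (t m - v)
    rw [hj, hi]
    have h5 : (t m - v) j - (t m - v) i ≤ max (t m j - v j - t m i + v i) 0 := by
      simp only [Pi.sub_apply]
      exact le_max_of_le_left (by ring_nf; rfl)
    have h6 : max (t m j - v j - t m i + v i) 0
        ≤ ∑ i' : Fin N, max (t m j - v j - t m i' + v i') 0 :=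
      Finset.single_le_sum (f := fun i' => max (t m j - v j - t m i' + v i') 0)
        (fun i' _ => le_max_right _ 0) (Finset.mem_univ i)
    have h7 := hFm j
    simp only [hF] at h7
    linarith
end

section
/- Let x_1,…,x_K ∈ ℝ^N and let G : ℝ^N → ℝ^N satisfy the max-descent assumption for x_1,…,x_K, i.e., G(t)_j > 0 implies there exists k ≤ K with t_j − x_{kj} = max_{i≤N}(t_i − x_{ki}). Let (t_m) be the max-tropical descent sequence driven by G with step sizes a_m > 0, and assume that for every m, G(t_m) ≠ 0 and Σ_{i≤N} G(t_m)_i = 0. Let V be the min-tropical convex hull of x_1,…,x_K. Fix ε > 0; let M_1 be such that a_m ≤ ε/N for all m ≥ M_1, and let M_2 ≥ M_1 be such that s_m ≥ max_{i≤N} Δ'_i(t_{M_1}) + s_{M_1} − K·ε for all m ≥ M_2. Then d_tr(t_m, V) ≤ ε for all m ≥ M_2. -/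
/-- The min-tropical convex hull of the points `x 1, …, x K`:
`V = {t : ∃ λ, t j = min_k (λ_k + x_{k j}) for all j}`. -/
def tconvMin {N K : ℕ} [NeZero K] (x : Fin K → Fin N → ℝ) : Set (Fin N → ℝ) :=
  {t | ∃ lam : Fin K → ℝ, ∀ j,
    t j = Finset.univ.inf' Finset.univ_nonempty (fun k => lam k + x k j)}

/-- `Δ'_i(t) = Σ_{k ≤ K} Σ_{j ≤ N} [t_j − x_{k j} − t_i + x_{k i}]⁺`. -/
def Delta' {N K : ℕ} (x : Fin K → Fin N → ℝ) (i : Fin N) (t : Fin N → ℝ) : ℝ :=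
  ∑ k, ∑ j, max (t j - x k j - t i + x k i) 0

/-- `f_k(s) = max_j (s_j - x_{k j})`. -/
noncomputable def tdF {N K : ℕ} [NeZero N] (x : Fin K → Fin N → ℝ) (s : Fin N → ℝ)
    (k : Fin K) : ℝ :=
  Finset.univ.sup' Finset.univ_nonempty (fun i => s i - x k i)

/-- `g_i(s) = min_k (f_k(s) - s_i + x_{k i})`. -/
noncomputable def tdG {N K : ℕ} [NeZero N] [NeZero K] (x : Fin K → Fin N → ℝ)
    (s : Fin N → ℝ) (i : Fin N) : ℝ :=
  Finset.univ.inf' Finset.univ_nonempty (fun k => tdF x s k - s i + x k i)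

lemma tdG_nonneg {N K : ℕ} [NeZero N] [NeZero K] (x : Fin K → Fin N → ℝ)
    (s : Fin N → ℝ) (i : Fin N) : 0 ≤ tdG x s i := by
  apply Finset.le_inf'
  intro k _
  have h := Finset.le_sup' (fun j => s j - x k j) (Finset.mem_univ i)
  simp only [tdF]
  linarith

lemma K_mul_tdG_le_Delta' {N K : ℕ} [NeZero N] [NeZero K] (x : Fin K → Fin N → ℝ)
    (s : Fin N → ℝ) (i : Fin N) : (K : ℝ) * tdG x s i ≤ Delta' x i s := by
  have h1 : ∀ k : Fin K, tdG x s i ≤ ∑ j, max (s j - x k j - s i + x k i) 0 := by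
    intro k
    obtain ⟨j, _, hj⟩ := Finset.exists_mem_eq_sup' (Finset.univ_nonempty)
      (fun j => s j - x k j)
    have h2 : tdG x s i ≤ tdF x s k - s i + x k i :=
      Finset.inf'_le _ (Finset.mem_univ k)
    have h3 : tdF x s k - s i + x k i ≤ max (s j - x k j - s i + x k i) 0 := by
      rw [tdF, hj]; exact le_max_left _ _
    calc tdG x s i ≤ max (s j - x k j - s i + x k i) 0 := h2.trans h3
      _ ≤ ∑ j, max (s j - x k j - s i + x k i) 0 :=
          Finset.single_le_sum (f := fun j => max (s j - x k j - s i + x k i) 0)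
            (fun j _ => le_max_right _ _) (Finset.mem_univ j)
  calc (K : ℝ) * tdG x s i = ∑ _k : Fin K, tdG x s i := by
        simp [Finset.sum_const, mul_comm]
    _ ≤ Delta' x i s := Finset.sum_le_sum (fun k _ => h1 k)

lemma sum_add_le_sum {α : Type*} [Fintype α] [DecidableEq α] (f g : α → ℝ) (c : ℝ) (i : α)
    (h : ∀ y, f y ≤ g y) (hi : f i + c ≤ g i) : (∑ y, f y) + c ≤ ∑ y, g y := by
  have e1 := Finset.add_sum_erase Finset.univ f (Finset.mem_univ i)
  have e2 := Finset.add_sum_erase Finset.univ g (Finset.mem_univ i)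
  have h3 : ∑ y ∈ Finset.univ.erase i, f y ≤ ∑ y ∈ Finset.univ.erase i, g y :=
    Finset.sum_le_sum (fun y _ => h y)
  linarith

section Step

variable {N K : ℕ} [NeZero N] [NeZero K] (x : Fin K → Fin N → ℝ)
  (Q : Fin N → Prop) [DecidablePred Q] (s s' : Fin N → ℝ) (c : ℝ)

lemma step_le (hs : ∀ j, s' j = s j - (if Q j then c else 0)) (hc : 0 ≤ c) :
    ∀ j, s' j ≤ s j := by
  intro j; rw [hs]; split <;> linarith

lemma tdF_step_le (hs : ∀ j, s' j = s j - (if Q j then c else 0)) (hc : 0 ≤ c)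
    (k : Fin K) : tdF x s' k ≤ tdF x s k := by
  apply Finset.sup'_le
  intro j _
  have h1 := step_le Q s s' c hs hc j
  have h2 : s j - x k j ≤ tdF x s k := Finset.le_sup' (fun j => s j - x k j) (Finset.mem_univ j)
  linarith

lemma tdG_step_notQ (hs : ∀ j, s' j = s j - (if Q j then c else 0)) (hc : 0 ≤ c)
    (i : Fin N) (hi : ¬ Q i) : tdG x s' i ≤ tdG x s i := by
  obtain ⟨k, _, hk⟩ := Finset.exists_mem_eq_inf' (Finset.univ_nonempty)
    (fun k => tdF x s k - s i + x k i)
  have h1 : tdG x s' i ≤ tdF x s' k - s' i + x k i := Finset.inf'_le _ (Finset.mem_univ k)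
  have h2 := tdF_step_le x Q s s' c hs hc k
  have h3 : s' i = s i := by rw [hs]; simp [hi]
  have hk' : tdG x s i = tdF x s k - s i + x k i := hk
  linarith

lemma tdG_step_Q (hs : ∀ j, s' j = s j - (if Q j then c else 0)) (hc : 0 ≤ c)
    (i : Fin N) (hi : Q i) (hmax : ∃ k, s i - x k i = tdF x s k) :
    tdG x s' i ≤ c := by
  obtain ⟨k, hk⟩ := hmax
  have h1 : tdG x s' i ≤ tdF x s' k - s' i + x k i := Finset.inf'_le _ (Finset.mem_univ k)
  have h2 := tdF_step_le x Q s s' c hs hc k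
  have h3 : s' i = s i - c := by rw [hs]; simp [hi]
  have h4 : s i - x k i ≤ tdF x s k := hk.le
  linarith

lemma Delta'_step (hs : ∀ j, s' j = s j - (if Q j then c else 0)) (hc : 0 ≤ c)
    (i : Fin N) (hi : ¬ Q i) (j₀ : Fin N) (hj₀ : Q j₀)
    (hmax : ∃ k, s j₀ - x k j₀ = tdF x s k) (hca : c ≤ tdG x s i) :
    Delta' x i s' + c ≤ Delta' x i s := by
  obtain ⟨k₀, hk₀⟩ := hmax
  have hsi : s' i = s i := by rw [hs]; simp [hi]
  have hterm : ∀ k j, max (s' j - x k j - s' i + x k i) 0 ≤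
      max (s j - x k j - s i + x k i) 0 := by
    intro k j
    have := step_le Q s s' c hs hc j
    rw [hsi]
    apply max_le_max _ le_rfl
    linarith
  have hT : c ≤ s j₀ - x k₀ j₀ - s i + x k₀ i := by
    have h1 : tdG x s i ≤ tdF x s k₀ - s i + x k₀ i := Finset.inf'_le _ (Finset.mem_univ k₀)
    rw [← hk₀] at h1; linarith
  have hj₀' : s' j₀ = s j₀ - c := by rw [hs]; simp [hj₀]
  have hkey : max (s' j₀ - x k₀ j₀ - s' i + x k₀ i) 0 + c ≤
      max (s j₀ - x k₀ j₀ - s i + x k₀ i) 0 := by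
    rw [hsi, hj₀']
    rw [max_eq_left (by linarith : (0:ℝ) ≤ s j₀ - c - x k₀ j₀ - s i + x k₀ i),
      max_eq_left (by linarith : (0:ℝ) ≤ s j₀ - x k₀ j₀ - s i + x k₀ i)]
    ring_nf; linarith
  rw [Delta', Delta']
  apply sum_add_le_sum _ _ c k₀
  · intro k; exact Finset.sum_le_sum (fun j _ => hterm k j)
  · apply sum_add_le_sum _ _ c j₀
    · intro j; exact hterm k₀ j
    · exact hkey

end Step

/-- Convergence of max-tropical descent to the min-tropical convex hull of the data:
after `M₂` steps (where `M₁, M₂` are as described), the max-tropical descent sequence is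
within tropical distance `ε` of `V = tconv_min(x₁, …, x_K)`. -/
theorem stmt5 {N K : ℕ} [NeZero N] [NeZero K]
    (x : Fin K → Fin N → ℝ) (G : (Fin N → ℝ) → (Fin N → ℝ))
    (hG : ∀ t j, 0 < G t j → ∃ k, t j - x k j =
      Finset.univ.sup' Finset.univ_nonempty (fun i => t i - x k i))
    (a : ℕ → ℝ) (ha : ∀ m, 1 ≤ m → 0 < a m)
    (t : ℕ → Fin N → ℝ)
    (hstep : ∀ m : ℕ, t (m + 1) =
      t m + a (m + 1) • (fun i => if 0 < G (t m) i then (-1 : ℝ) else 0))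
    (hGne : ∀ m, G (t m) ≠ 0) (hGsum : ∀ m, ∑ i, G (t m) i = 0)
    (ε : ℝ) (hε : 0 < ε)
    (M₁ M₂ : ℕ) (hM : M₁ ≤ M₂)
    (hM₁ : ∀ m, M₁ ≤ m → a m ≤ ε / N)
    (hM₂ : ∀ m, M₂ ≤ m → (∑ n ∈ Finset.Icc 1 m, a n) ≥
      Finset.univ.sup' Finset.univ_nonempty (fun i => Delta' x i (t M₁)) +
        (∑ n ∈ Finset.Icc 1 M₁, a n) - K * ε) :
    ∀ m, M₂ ≤ m → sInf ((fun v => trDist (t m) v) '' tconvMin x) ≤ ε := by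
  intro m hm
  have hN1 : (1 : ℝ) ≤ N := by
    exact_mod_cast Nat.one_le_iff_ne_zero.mpr (NeZero.ne N)
  have hεN : ε / N ≤ ε := by
    rw [div_le_iff₀ (by linarith)]
    nlinarith
  -- step formula
  have hstep' : ∀ n j, t (n + 1) j = t n j - (if 0 < G (t n) j then a (n+1) else 0) := by
    intro n j
    rw [hstep n]
    by_cases h : 0 < G (t n) j <;> simp [h] <;> ring
  -- existence of a positive coordinate of G (t n)
  have hQne : ∀ n, ∃ j, 0 < G (t n) j := by
    intro n
    by_contra h
    push_neg at h
    apply hGne n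
    funext j
    have := (Finset.sum_eq_zero_iff_of_nonpos (fun j _ => h j)).mp (hGsum n) j
      (Finset.mem_univ j)
    simpa using this
  have hmax : ∀ n j, 0 < G (t n) j → ∃ k, t n j - x k j = tdF x (t n) k := by
    intro n j h; exact hG (t n) j h
  -- show g_i (t m) ≤ ε for every i
  have hgle : ∀ i, tdG x (t m) i ≤ ε := by
    intro i
    have inv : ∀ n, M₁ ≤ n → n ≤ m →
        tdG x (t n) i ≤ ε ∨
        Delta' x i (t n) + ∑ p ∈ Finset.Icc (M₁+1) n, a p ≤ Delta' x i (t M₁) := by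
      intro n hn
      induction n, hn using Nat.le_induction with
      | base =>
        intro _
        right
        rw [Finset.Icc_eq_empty (by omega)]
        simp
      | succ n hn IH =>
        intro hnm
        have hIH := IH (by omega)
        have hapos : 0 < a (n+1) := ha _ (by omega)
        have haε : a (n+1) ≤ ε / N := hM₁ _ (by omega)
        have hs := hstep' n
        by_cases hQ : 0 < G (t n) i
        · left
          have := tdG_step_Q x (fun j => 0 < G (t n) j) (t n) (t (n+1)) (a (n+1))
            hs hapos.le i hQ (hmax n i hQ)
          linarith
        · rcases hIH with hg | hΔ
          · left
            have := tdG_step_notQ x (fun j => 0 < G (t n) j) (t n) (t (n+1)) (a (n+1))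
              hs hapos.le i hQ
            linarith
          · by_cases hca : a (n+1) ≤ tdG x (t n) i
            · right
              obtain ⟨j₀, hj₀⟩ := hQne n
              have hd := Delta'_step x (fun j => 0 < G (t n) j) (t n) (t (n+1)) (a (n+1))
                hs hapos.le i hQ j₀ hj₀ (hmax n j₀ hj₀) hca
              rw [Finset.sum_Icc_succ_top (by omega : M₁ + 1 ≤ n + 1)]
              linarith
            · left
              push_neg at hca
              have := tdG_step_notQ x (fun j => 0 < G (t n) j) (t n) (t (n+1)) (a (n+1))
                hs hapos.le i hQ
              linarith
    rcases inv m (by omega) le_rfl with hg | hΔ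
    · exact hg
    · -- Delta' x i (t m) ≤ K ε
      have hsplit : (∑ n ∈ Finset.Icc 1 M₁, a n) + ∑ p ∈ Finset.Icc (M₁+1) m, a p =
          ∑ n ∈ Finset.Icc 1 m, a n := by
        have e : ∀ b : ℕ, Finset.Icc 1 b = Finset.Ioc 0 b := by
          intro b; rw [← Finset.Icc_add_one_left_eq_Ioc]; rfl
        rw [e, e, Finset.Icc_add_one_left_eq_Ioc]
        exact Finset.sum_Ioc_consecutive _ (Nat.zero_le _) (by omega)
      have hsup : Delta' x i (t M₁) ≤
          Finset.univ.sup' Finset.univ_nonempty (fun i => Delta' x i (t M₁)) :=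
        Finset.le_sup' (f := fun i => Delta' x i (t M₁)) (Finset.mem_univ i)
      have h2 := hM₂ m hm
      have hDle : Delta' x i (t m) ≤ K * ε := by linarith
      have hK := K_mul_tdG_le_Delta' x (t m) i
      have hKpos : (0 : ℝ) < K := by
        exact_mod_cast Nat.pos_of_ne_zero (NeZero.ne K)
      nlinarith
  -- the projection point
  set v : Fin N → ℝ := fun j =>
    Finset.univ.inf' Finset.univ_nonempty (fun k => tdF x (t m) k + x k j) with hv
  have hvmem : v ∈ tconvMin x := ⟨fun k => tdF x (t m) k, fun j => rfl⟩
  have hle0 : ∀ j, t m j - v j ≤ 0 := by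
    intro j
    have : t m j ≤ v j := by
      apply Finset.le_inf'
      intro k _
      have h0 : t m j - x k j ≤ tdF x (t m) k :=
        Finset.le_sup' (fun j => t m j - x k j) (Finset.mem_univ j)
      linarith
    linarith
  have hgeε : ∀ j, -ε ≤ t m j - v j := by
    intro j
    obtain ⟨k, _, hk⟩ := Finset.exists_mem_eq_inf' (Finset.univ_nonempty)
      (fun k => tdF x (t m) k - t m j + x k j)
    have h1 : v j ≤ tdF x (t m) k + x k j := Finset.inf'_le _ (Finset.mem_univ k)
    have h2 : tdG x (t m) j ≤ ε := hgle j
    have hk' : tdG x (t m) j = tdF x (t m) k - t m j + x k j := hk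
    linarith
  have hdist : trDist (t m) v ≤ ε := by
    unfold trDist trNorm
    have h1 : Finset.univ.sup' Finset.univ_nonempty (t m - v) ≤ 0 :=
      Finset.sup'_le _ _ (fun j _ => hle0 j)
    have h2 : -ε ≤ Finset.univ.inf' Finset.univ_nonempty (t m - v) :=
      Finset.le_inf' _ _ (fun j _ => hgeε j)
    linarith
  have hnonneg : ∀ y ∈ (fun v => trDist (t m) v) '' tconvMin x, (0:ℝ) ≤ y := by
    rintro y ⟨w, _, rfl⟩
    show (0:ℝ) ≤ trNorm (t m - w)
    unfold trNorm
    have i : Fin N := Classical.arbitrary _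
    have h1 : Finset.univ.inf' Finset.univ_nonempty (t m - w) ≤ (t m - w) i :=
      Finset.inf'_le _ (Finset.mem_univ i)
    have h2 : (t m - w) i ≤ Finset.univ.sup' Finset.univ_nonempty (t m - w) :=
      Finset.le_sup' _ (Finset.mem_univ i)
    linarith
  have hbdd : BddBelow ((fun v => trDist (t m) v) '' tconvMin x) := ⟨0, hnonneg⟩
  exact (csInf_le hbdd ⟨v, hvmem, rfl⟩).trans hdist
end

section
/- Let x_1,…,x_K ∈ ℝ^N, let V be the max-tropical convex hull of x_1,…,x_K, and for j ≤ N let δ_j(t) = min_{k≤K} Σ_{i≤N} [t_j − x_{kj} − t_i + x_{ki}]^+. Then for every t ∈ ℝ^N, d_tr(t, V) ≤ max_{j≤N} δ_j(t). -/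
/-- `δ_j(t) = min_{k ≤ K} Σ_{i ≤ N} [t_j − x_{k j} − t_i + x_{k i}]⁺`. -/
noncomputable def deltaF {N K : ℕ} [NeZero K] (x : Fin K → Fin N → ℝ)
    (j : Fin N) (t : Fin N → ℝ) : ℝ :=
  Finset.univ.inf' Finset.univ_nonempty
    (fun k => ∑ i, max (t j - x k j - t i + x k i) 0)

/-- The tropical distance from any point `t` to the max-tropical convex hull `V` of the
data is bounded above by `max_j δ_j(t)`. -/
theorem stmt7 {N K : ℕ} [NeZero N] [NeZero K] (x : Fin K → Fin N → ℝ)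
    (t : Fin N → ℝ) :
    sInf ((fun v => trDist t v) '' tconvMax x) ≤
      Finset.univ.sup' Finset.univ_nonempty (fun j => deltaF x j t) := by
  set lam : Fin K → ℝ := fun k => Finset.univ.inf' Finset.univ_nonempty (fun i => t i - x k i)
  set v : Fin N → ℝ := fun j => Finset.univ.sup' Finset.univ_nonempty (fun k => lam k + x k j)
  have hvmem : v ∈ tconvMax x := ⟨lam, fun j => rfl⟩
  -- v j ≤ t j
  have hvt : ∀ j, v j ≤ t j := by
    intro j
    apply Finset.sup'_le
    intro k _
    have : lam k ≤ t j - x k j := Finset.inf'_le _ (Finset.mem_univ j)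
    linarith
  have hbdd : BddBelow ((fun v => trDist t v) '' tconvMax x) := by
    refine ⟨0, ?_⟩
    rintro d ⟨w, _, rfl⟩
    have : Finset.univ.inf' Finset.univ_nonempty (t - w) ≤
        Finset.univ.sup' Finset.univ_nonempty (t - w) :=
      le_trans (Finset.inf'_le _ (Finset.mem_univ (Classical.arbitrary (Fin N))))
        (Finset.le_sup' _ (Finset.mem_univ (Classical.arbitrary (Fin N))))
    simp only [trDist, trNorm]
    linarith
  have hmem : trDist t v ∈ (fun v => trDist t v) '' tconvMax x := ⟨v, hvmem, rfl⟩
  refine le_trans (csInf_le hbdd hmem) ?_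
  -- bound trDist t v
  have hinf0 : (0:ℝ) ≤ Finset.univ.inf' Finset.univ_nonempty (t - v) := by
    apply Finset.le_inf'
    intro j _
    have := hvt j
    simp only [Pi.sub_apply]
    linarith
  have hsup : Finset.univ.sup' Finset.univ_nonempty (t - v) ≤
      Finset.univ.sup' Finset.univ_nonempty (fun j => deltaF x j t) := by
    apply Finset.sup'_le
    intro j _
    refine le_trans ?_ (Finset.le_sup' _ (Finset.mem_univ j))
    simp only [Pi.sub_apply, deltaF]
    apply Finset.le_inf'
    intro k _
    have h1 : lam k + x k j ≤ v j := Finset.le_sup' (fun k => lam k + x k j) (Finset.mem_univ k)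
    -- lam k = inf_i (t i - x k i); pick i0 achieving it
    obtain ⟨i0, _, hi0⟩ := Finset.exists_mem_eq_inf' (Finset.univ_nonempty)
      (fun i => t i - x k i)
    have h2 : lam k = t i0 - x k i0 := hi0
    have h3 : max (t j - x k j - t i0 + x k i0) 0 ≤
        ∑ i, max (t j - x k j - t i + x k i) 0 :=
      Finset.single_le_sum (f := fun i => max (t j - x k j - t i + x k i) 0) (fun i _ => le_max_right _ _) (Finset.mem_univ i0)
    have h4 : t j - x k j - t i0 + x k i0 ≤ max (t j - x k j - t i0 + x k i0) 0 :=
      le_max_left _ _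
    linarith
  simp only [trDist, trNorm]
  linarith
end

section
/- Let N ≥ 2 and let x_1,…,x_K ∈ ℝ^N. Define the tropical linear regression objective f(t) = max_{k≤K} ( max_{i≤N}(x_{ki} − t_i) − 2ndmax_{i≤N}(x_{ki} − t_i) ). Then for every c ∈ ℝ the sub-level set {t ∈ ℝ^N : f(t) ≤ c} is min-tropically convex. -/
/-- The second-largest entry (with multiplicity) of `y : Fin N → ℝ` when `N ≥ 2`:
`2ndmax_{i} y_i = max_{i ≠ j} min (y_i, y_j)`. -/
noncomputable def secondMax {N : ℕ} (hN : 2 ≤ N) (y : Fin N → ℝ) : ℝ :=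
  (Finset.univ.filter (fun p : Fin N × Fin N => p.1 ≠ p.2)).sup'
    (⟨(⟨0, by omega⟩, ⟨1, by omega⟩), by
      simp [Finset.mem_filter, Fin.ext_iff]⟩)
    (fun p => min (y p.1) (y p.2))

/-- A set `S ⊆ ℝ^N` is min-tropically convex if it is closed under pointwise
min-tropical linear combinations. -/
def MinTropConvex {N : ℕ} (S : Set (Fin N → ℝ)) : Prop :=
  ∀ t ∈ S, ∀ s ∈ S, ∀ α β : ℝ, (fun i => min (α + t i) (β + s i)) ∈ S

lemma sup'_sub_const {ι : Type*} (s : Finset ι) (hs : s.Nonempty) (f : ι → ℝ) (a : ℝ) :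
    s.sup' hs (fun i => f i - a) = s.sup' hs f - a := by
  apply le_antisymm
  · apply Finset.sup'_le
    intro i hi
    have := Finset.le_sup' f hi
    linarith
  · rw [sub_le_iff_le_add]
    apply Finset.sup'_le
    intro i hi
    have := Finset.le_sup' (fun i => f i - a) hi
    linarith

lemma sup'_max_eq {ι : Type*} (s : Finset ι) (hs : s.Nonempty) (u v : ι → ℝ) :
    s.sup' hs (fun i => max (u i) (v i)) = max (s.sup' hs u) (s.sup' hs v) := by
  apply le_antisymm
  · apply Finset.sup'_le
    intro i hi
    exact max_le_max (Finset.le_sup' u hi) (Finset.le_sup' v hi)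
  · apply max_le <;> apply Finset.sup'_le <;> intro i hi
    · exact le_trans (le_max_left (u i) (v i))
        (Finset.le_sup' (fun i => max (u i) (v i)) hi)
    · exact le_trans (le_max_right (u i) (v i))
        (Finset.le_sup' (fun i => max (u i) (v i)) hi)

lemma secondMax_mono {N : ℕ} (hN : 2 ≤ N) {u v : Fin N → ℝ} (h : ∀ i, u i ≤ v i) :
    secondMax hN u ≤ secondMax hN v := by
  unfold secondMax
  apply Finset.sup'_le
  intro p hp
  exact le_trans (min_le_min (h p.1) (h p.2))
    (Finset.le_sup' (fun p : Fin N × Fin N => min (v p.1) (v p.2)) hp)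

lemma secondMax_sub_const {N : ℕ} (hN : 2 ≤ N) (y : Fin N → ℝ) (a : ℝ) :
    secondMax hN (fun i => y i - a) = secondMax hN y - a := by
  unfold secondMax
  simp only [min_sub_sub_right]
  exact sup'_sub_const _ _ _ a

lemma key {N : ℕ} (hN : 2 ≤ N) (u v : Fin N → ℝ) :
    Finset.univ.sup' (@Finset.univ_nonempty (Fin N) _ ⟨⟨0, by omega⟩⟩)
        (fun i => max (u i) (v i)) -
      secondMax hN (fun i => max (u i) (v i)) ≤
    max (Finset.univ.sup' (@Finset.univ_nonempty (Fin N) _ ⟨⟨0, by omega⟩⟩) u -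
          secondMax hN u)
        (Finset.univ.sup' (@Finset.univ_nonempty (Fin N) _ ⟨⟨0, by omega⟩⟩) v -
          secondMax hN v) := by
  rw [sup'_max_eq]
  have hu : secondMax hN u ≤ secondMax hN (fun i => max (u i) (v i)) :=
    secondMax_mono hN (fun i => le_max_left _ _)
  have hv : secondMax hN v ≤ secondMax hN (fun i => max (u i) (v i)) :=
    secondMax_mono hN (fun i => le_max_right _ _)
  rcases le_total (Finset.univ.sup' (@Finset.univ_nonempty (Fin N) _ ⟨⟨0, by omega⟩⟩) v)
    (Finset.univ.sup' (@Finset.univ_nonempty (Fin N) _ ⟨⟨0, by omega⟩⟩) u) with h | h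
  · rw [max_eq_left h]
    exact le_trans (by linarith) (le_max_left _ _)
  · rw [max_eq_right h]
    exact le_trans (by linarith) (le_max_right _ _)

/-- The sub-level sets of the tropical linear regression objective
`f(t) = max_k (max_i (x_{k i} − t_i) − 2ndmax_i (x_{k i} − t_i))` are
min-tropically convex. -/
theorem stmt11 {N K : ℕ} [NeZero K] (hN : 2 ≤ N) (x : Fin K → Fin N → ℝ) (c : ℝ) :
    MinTropConvex {t : Fin N → ℝ |
      Finset.univ.sup' Finset.univ_nonempty (fun k =>
        Finset.univ.sup' (@Finset.univ_nonempty (Fin N) _ ⟨⟨0, by omega⟩⟩)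
            (fun i => x k i - t i) -
          secondMax hN (fun i => x k i - t i)) ≤ c} := by
  intro t ht s hs α β
  simp only [Set.mem_setOf_eq] at ht hs ⊢
  apply Finset.sup'_le
  intro k _
  have hfun : (fun i => x k i - min (α + t i) (β + s i)) =
      (fun i => max ((fun j => x k j - t j - α) i) ((fun j => x k j - s j - β) i)) := by
    funext i
    rcases le_total (α + t i) (β + s i) with h | h
    · rw [min_eq_left h, max_eq_left (by simp only; linarith)]; simp only; ring
    · rw [min_eq_right h, max_eq_right (by simp only; linarith)]; simp only; ring
  rw [hfun]
  refine le_trans (key hN _ _) ?_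
  have e1 : ∀ (z : Fin N → ℝ) (a : ℝ),
      Finset.univ.sup' (@Finset.univ_nonempty (Fin N) _ ⟨⟨0, by omega⟩⟩)
          (fun i => z i - a) - secondMax hN (fun i => z i - a) =
      Finset.univ.sup' (@Finset.univ_nonempty (Fin N) _ ⟨⟨0, by omega⟩⟩) z -
        secondMax hN z := by
    intro z a
    rw [sup'_sub_const, secondMax_sub_const]
    ring
  rw [e1 (fun j => x k j - t j) α, e1 (fun j => x k j - s j) β]
  have h1 := Finset.le_sup' (f := fun k =>
    Finset.univ.sup' (@Finset.univ_nonempty (Fin N) _ ⟨⟨0, by omega⟩⟩)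
        (fun i => x k i - t i) - secondMax hN (fun i => x k i - t i))
    (Finset.mem_univ k)
  have h2 := Finset.le_sup' (f := fun k =>
    Finset.univ.sup' (@Finset.univ_nonempty (Fin N) _ ⟨⟨0, by omega⟩⟩)
        (fun i => x k i - s i) - secondMax hN (fun i => x k i - s i))
    (Finset.mem_univ k)
  exact max_le (le_trans h1 ht) (le_trans h2 hs)
end
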